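/- arXiv:1705.06837 — 2 statements merged into one kernel-verified Lean document; each statement's English description precedes it below -/
import Mathlib

section
/- Let ρ₁ > ρ₀ > 0 and γ > 1, with c₀² = ρ₀^{γ-1}, c₁² = ρ₁^{γ-1}. Define ξ₁ = sqrt(2ρ₁²(c₁² - c₀²)/((γ-1)(ρ₁² - ρ₀²))) and u₁ = ((ρ₁-ρ₀)/ρ₁)ξ₁. Then 0 < ξ₁ - u₁ < c₁, i.e., the incident shock is pseudo-subsonic relative to the left state. -/
/-!
Writing s = ρ₀/ρ₁, we have ξ₁ - u₁ = s ξ₁ > 0, and after dividing by ρ₁^(γ+1) the bound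
(ξ₁ - u₁)² < c₁² becomes (γ+1) s² - (γ-1) < 2 s^(γ+1). This is Bernoulli's inequality
1 + p t < (1 + t)^p for p = (γ+1)/2 > 1 and t = s² - 1 ≠ 0.
-/

open Real

theorem sub_lt_two_mul_rpow_of_ne_one {γ s : ℝ} (hγ : 1 < γ) (hs : 0 ≤ s) (hs₁ : s ≠ 1) :
    (γ + 1) * s ^ 2 - (γ - 1) < 2 * s ^ (γ + 1) := by
  have hsq : s ^ 2 - 1 ≠ 0 := by
    intro h
    exact hs₁ ((pow_eq_one_iff_of_nonneg hs two_ne_zero).1 (sub_eq_zero.1 h))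
  have hbernoulli := one_add_mul_self_lt_rpow_one_add (s := s ^ 2 - 1) (by nlinarith) hsq
    (p := (γ + 1) / 2) (by linarith)
  have hpow : (1 + (s ^ 2 - 1)) ^ ((γ + 1) / 2) = s ^ (γ + 1) := by
    rw [add_sub_cancel, ← rpow_two, ← rpow_mul hs]
    ring_nf
  rw [hpow] at hbernoulli
  linarith

theorem two_mul_sq_mul_rpow_sub_lt {γ a b : ℝ} (hγ : 1 < γ) (ha : 0 ≤ a) (hb : 0 < b)
    (hab : a ≠ b) :
    2 * a ^ 2 * (b ^ (γ - 1) - a ^ (γ - 1)) < (γ - 1) * (b ^ 2 - a ^ 2) * b ^ (γ - 1) := by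
  obtain ⟨s, hs, rfl⟩ : ∃ s, 0 ≤ s ∧ a = s * b := ⟨a / b, by positivity, by field_simp⟩
  have hs₁ : s ≠ 1 := by rintro rfl; simp at hab
  have hrpow : s ^ (γ + 1) = s ^ 2 * s ^ (γ - 1) := by
    rw [← rpow_two, ← rpow_add' hs (by linarith)]
    ring_nf
  have hscaled := mul_lt_mul_of_pos_left (sub_lt_two_mul_rpow_of_ne_one hγ hs hs₁)
    (by positivity : 0 < b ^ 2 * b ^ (γ - 1))
  rw [mul_rpow hs hb.le]
  linear_combination hscaled + 2 * b ^ 2 * b ^ (γ - 1) * hrpow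

theorem stmt_5 (ρ₀ ρ₁ γ : ℝ) (hρ₀ : 0 < ρ₀) (hρ : ρ₀ < ρ₁) (hγ : 1 < γ)
    (c₀sq c₁sq ξ₁ u₁ c₁ : ℝ)
    (hc₀ : c₀sq = ρ₀ ^ (γ - 1)) (hc₁ : c₁sq = ρ₁ ^ (γ - 1))
    (hc₁pos : 0 < c₁) (hc₁sq : c₁ ^ 2 = c₁sq)
    (hξ₁ : ξ₁ = Real.sqrt (2 * ρ₁ ^ 2 * (c₁sq - c₀sq) / ((γ - 1) * (ρ₁ ^ 2 - ρ₀ ^ 2))))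
    (hu₁ : u₁ = (ρ₁ - ρ₀) / ρ₁ * ξ₁) :
    0 < ξ₁ - u₁ ∧ ξ₁ - u₁ < c₁ := by
  have hρ₁ : 0 < ρ₁ := hρ₀.trans hρ
  have hc : c₀sq < c₁sq := by
    rw [hc₀, hc₁]
    exact rpow_lt_rpow hρ₀.le hρ (by linarith)
  have hden : 0 < (γ - 1) * (ρ₁ ^ 2 - ρ₀ ^ 2) := mul_pos (by linarith) (by nlinarith)
  have hξ₁sq_pos : 0 < 2 * ρ₁ ^ 2 * (c₁sq - c₀sq) / ((γ - 1) * (ρ₁ ^ 2 - ρ₀ ^ 2)) :=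
    div_pos (mul_pos (by positivity) (sub_pos.2 hc)) hden
  have hξ₁_pos : 0 < ξ₁ := hξ₁ ▸ sqrt_pos.2 hξ₁sq_pos
  have hdiff : ξ₁ - u₁ = ρ₀ / ρ₁ * ξ₁ := by
    rw [hu₁]; field_simp; ring
  have hdiff_sq : (ξ₁ - u₁) ^ 2 =
      2 * ρ₀ ^ 2 * (c₁sq - c₀sq) / ((γ - 1) * (ρ₁ ^ 2 - ρ₀ ^ 2)) := by
    rw [hdiff, mul_pow, hξ₁, sq_sqrt hξ₁sq_pos.le]
    field_simp
  refine ⟨hdiff ▸ by positivity, ?_⟩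
  refine lt_of_pow_lt_pow_left₀ 2 hc₁pos.le ?_
  rw [hdiff_sq, hc₁sq, div_lt_iff₀ hden, hc₀, hc₁]
  linarith [two_mul_sq_mul_rpow_sub_lt hγ hρ₀.le hρ₁ hρ.ne]
end

section
/- Under the assumptions of the previous identity, with additionally a_{θθ} ≥ λ (from ellipticity with y = (0,1)), for every λ > 0 there exist L₀ ≥ 1 depending only on λ such that for all L ≥ L₀ there is α̂ > 0 with: for all |α| ≤ α̂, r > 0, and θ ∈ [-π, π], (μLe^{-Lθ}(-a_{θθ}L + 2a_{rθ}(α-1)) + α((α-1)a_{rr} + a_{θθ})h̄(θ)) r^{α-2} ≤ -(μL²/(2C))e^{-Lθ} r^{α-2} < 0, where C depends only on λ. -/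
/-!
Write `B = μ e^{-Lθ}` with `μ = e^{-πL}/2`, so that `e^{-2πL}/2 ≤ B ≤ 1/2` on `[-π, π]`. Since
`a_θθ ≥ λ` and `|2 a_rθ (α - 1)| ≤ 4/λ`, the angular coefficient `-a_θθ L + 2 a_rθ (α - 1)` is at most
`-λL/2` once `L ≥ 8/λ²`, which makes the first term at most `-BλL²/2`. The second term is
`O(|α|/λ)`, so it is absorbed into half of that as soon as `|α| ≲ λ² L² e^{-2πL}`; this gives the
claim with `C = 2/λ`.
-/

open Real Set

lemma exp_barrier_weight_bounds {L θ : ℝ} (hL : 0 ≤ L) (hθ : θ ∈ Icc (-π) π) :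
    exp (-(2 * π) * L) ≤ exp (-π * L) * exp (-L * θ) ∧ exp (-π * L) * exp (-L * θ) ≤ 1 := by
  obtain ⟨hθ₁, hθ₂⟩ := hθ
  rw [← exp_add, exp_le_exp, exp_le_one_iff]
  constructor <;> nlinarith

lemma abs_sub_one_le_two {α : ℝ} (hα : |α| ≤ 1) : |α - 1| ≤ 2 :=
  (abs_sub _ _).trans (by rw [abs_one]; linarith)

lemma angular_coeff_le {lam L α arθ aθθ : ℝ} (hlam : 0 < lam) (hL : 8 / lam ^ 2 ≤ L)
    (hα : |α| ≤ 1) (harθ : |arθ| ≤ 1 / lam) (hlow : lam ≤ aθθ) :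
    -aθθ * L + 2 * arθ * (α - 1) ≤ -(lam * L / 2) := by
  have hα' := abs_sub_one_le_two hα
  have hmixed : 2 * arθ * (α - 1) ≤ 4 / lam :=
    calc 2 * arθ * (α - 1) ≤ 2 * (|arθ| * |α - 1|) := by
          rw [mul_assoc, ← abs_mul]; linarith [le_abs_self (arθ * (α - 1))]
      _ ≤ 2 * (1 / lam * 2) := by gcongr
      _ = 4 / lam := by ring
  have hL₈ : 8 ≤ lam ^ 2 * L := by rwa [div_le_iff₀' (by positivity)] at hL
  have hL₀ : 0 ≤ L := le_trans (by positivity) hL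
  have h4 : 4 / lam ≤ lam * L / 2 := by
    rw [div_le_div_iff₀ hlam two_pos]; nlinarith
  nlinarith

lemma abs_radial_coeff_le {lam α arr aθθ : ℝ} (hα : |α| ≤ 1) (harr : |arr| ≤ 1 / lam)
    (haθθ : |aθθ| ≤ 1 / lam) : |(α - 1) * arr + aθθ| ≤ 3 / lam := by
  have hα' := abs_sub_one_le_two hα
  calc |(α - 1) * arr + aθθ| ≤ |α - 1| * |arr| + |aθθ| := by
        rw [← abs_mul]; exact abs_add_le _ _
    _ ≤ 2 * (1 / lam) + 1 / lam := by gcongr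
    _ = 3 / lam := by ring

lemma weighted_bracket_le {M L B α X Y : ℝ} (hB₀ : 0 < B) (hB₁ : B ≤ 1) (hL : 0 < L)
    (hX : X ≤ -(2 * M / L)) (hαY : |α * Y| ≤ B * M) :
    B * L * X + α * Y * (1 - B) ≤ -(B * M) := by
  have hfirst : B * L * X ≤ -(2 * (B * M)) :=
    calc B * L * X ≤ B * L * -(2 * M / L) := by gcongr
      _ = -(2 * (B * M)) := by field_simp
  have hsecond : α * Y * (1 - B) ≤ B * M :=
    calc α * Y * (1 - B) ≤ |α * Y| * (1 - B) :=
          mul_le_mul_of_nonneg_right (le_abs_self _) (by linarith)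
      _ ≤ |α * Y| := mul_le_of_le_one_right (abs_nonneg _) (by linarith)
      _ ≤ B * M := hαY
  linarith

theorem stmt_11 (lam : ℝ) (hlam : 0 < lam) :
    ∃ C > (0 : ℝ), ∃ L₀ ≥ (1 : ℝ), ∀ L ≥ L₀, ∃ αh > (0 : ℝ),
      ∀ arr arθ aθθ : ℝ,
        (∀ y₁ y₂ : ℝ, lam * (y₁ ^ 2 + y₂ ^ 2)
            ≤ arr * y₁ ^ 2 + 2 * arθ * y₁ * y₂ + aθθ * y₂ ^ 2) →
        |arr| ≤ 1 / lam → |arθ| ≤ 1 / lam → |aθθ| ≤ 1 / lam → lam ≤ aθθ →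
        ∀ α : ℝ, |α| ≤ αh → ∀ r : ℝ, 0 < r → ∀ θ ∈ Set.Icc (-Real.pi) Real.pi,
          ((1 / 2) * Real.exp (-Real.pi * L) * L * Real.exp (-L * θ)
              * (-aθθ * L + 2 * arθ * (α - 1))
            + α * ((α - 1) * arr + aθθ)
              * (1 - (1 / 2) * Real.exp (-Real.pi * L) * Real.exp (-L * θ))) * r ^ (α - 2)
          ≤ -((1 / 2) * Real.exp (-Real.pi * L) * L ^ 2 / (2 * C)) * Real.exp (-L * θ)
              * r ^ (α - 2)
          ∧ -((1 / 2) * Real.exp (-Real.pi * L) * L ^ 2 / (2 * C)) * Real.exp (-L * θ)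
              * r ^ (α - 2) < 0 := by
  refine ⟨2 / lam, by positivity, max 1 (8 / lam ^ 2), le_max_left _ _, fun L hL => ?_⟩
  have hL₀ : 0 < L := one_pos.trans_le ((le_max_left _ _).trans hL)
  refine ⟨min 1 (lam ^ 2 * L ^ 2 * exp (-(2 * π) * L) / 24), by positivity, ?_⟩
  intro arr arθ aθθ _ harr harθ haθθ hlow α hα r hr θ hθ
  have hα₁ : |α| ≤ 1 := hα.trans (min_le_left _ _)
  obtain ⟨hw₀, hw₁⟩ := exp_barrier_weight_bounds hL₀.le hθ
  set B := (1 / 2) * exp (-π * L) * exp (-L * θ) with hB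
  have hB₀ : 0 < B := by positivity
  have hαY : |α * ((α - 1) * arr + aθθ)| ≤ B * (lam * L ^ 2 / 4) :=
    calc |α * ((α - 1) * arr + aθθ)|
        ≤ lam ^ 2 * L ^ 2 * exp (-(2 * π) * L) / 24 * (3 / lam) := by
          rw [abs_mul]
          gcongr
          exacts [hα.trans (min_le_right _ _), abs_radial_coeff_le hα₁ harr haθθ]
      _ = exp (-(2 * π) * L) / 2 * (lam * L ^ 2 / 4) := by field_simp; ring
      _ ≤ B * (lam * L ^ 2 / 4) := by gcongr; linarith
  have key := weighted_bracket_le hB₀ (by linarith) hL₀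
    ((angular_coeff_le hlam ((le_max_right _ _).trans hL) hα₁ harθ hlow).trans_eq
      (by field_simp; ring)) hαY
  have hrpow : 0 < r ^ (α - 2) := rpow_pos_of_pos hr _
  have hRHS : -((1 / 2) * exp (-π * L) * L ^ 2 / (2 * (2 / lam))) * exp (-L * θ)
      = -(B * (lam * L ^ 2 / 4)) := by rw [hB]; field_simp; ring
  rw [hRHS]
  refine ⟨mul_le_mul_of_nonneg_right ?_ hrpow.le,
    mul_neg_of_neg_of_pos (neg_neg_of_pos (mul_pos hB₀ (by positivity))) hrpow⟩
  calc _ = B * L * (-aθθ * L + 2 * arθ * (α - 1)) + α * ((α - 1) * arr + aθθ) * (1 - B) := by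
        rw [hB]; ring
    _ ≤ _ := key
end
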